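/- arXiv:1005.1381 — 5 statements merged into one kernel-verified Lean document; each statement's English description precedes it below -/
import Mathlib

section
/- Let α2, β1 > 0, δ ∈ (0,1), and y0 ∈ [δ,1]. Consider the eating-state flow started at (1, y0): x(t) = e^(−α2·t), y(t) = y0·e^(β1·t). (i) If y0 ≥ δ^(β1/α2), then t_ER := (1/β1)·ln(1/y0) satisfies t_ER ≤ (1/α2)·ln(1/δ), y(t_ER) = 1, x(t_ER) = y0^(α2/β1), and δ ≤ y0^(α2/β1) ≤ 1; that is, the flow exits the square [δ,1]² through the edge y = 1 at the point (y0^(α2/β1), 1). (ii) If y0 < δ^(β1/α2), then t_ES := (1/α2)·ln(1/δ) satisfies t_ES < (1/β1)·ln(1/y0), x(t_ES) = δ, y(t_ES) = δ^(−β1/α2)·y0, and δ ≤ δ^(−β1/α2)·y0 < 1; that is, the flow exits through the edge x = δ at the point (δ, δ^(−β1/α2)·y0). -/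
/-- The eating-state branch of the Poincaré map of the single-cow
model.  Starting from `(1, y0)` with `y0 ∈ [δ,1]`, the flow
`x(t) = exp(−α2·t)`, `y(t) = y0·exp(β1·t)` exits the square `[δ,1]²`:
(i) if `y0 ≥ δ^(β1/α2)` it exits through the edge `y = 1` at the point
`(y0^(α2/β1), 1)` at time `t_ER = (1/β1)·ln(1/y0)`;
(ii) if `y0 < δ^(β1/α2)` it exits through the edge `x = δ` at the point
`(δ, δ^(−β1/α2)·y0)` at time `t_ES = (1/α2)·ln(1/δ)`. -/
theorem eating_branch_of_poincare_map
    (α2 β1 δ y0 : ℝ)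
    (hα2 : 0 < α2) (hβ1 : 0 < β1) (hδ0 : 0 < δ) (hδ1 : δ < 1)
    (hy0l : δ ≤ y0) (hy0u : y0 ≤ 1) :
    ((δ ^ (β1 / α2) ≤ y0) →
      ∀ tER : ℝ, tER = (1 / β1) * Real.log (1 / y0) →
        tER ≤ (1 / α2) * Real.log (1 / δ) ∧
        y0 * Real.exp (β1 * tER) = 1 ∧
        Real.exp (-α2 * tER) = y0 ^ (α2 / β1) ∧
        δ ≤ y0 ^ (α2 / β1) ∧ y0 ^ (α2 / β1) ≤ 1) ∧
    ((y0 < δ ^ (β1 / α2)) →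
      ∀ tES : ℝ, tES = (1 / α2) * Real.log (1 / δ) →
        tES < (1 / β1) * Real.log (1 / y0) ∧
        Real.exp (-α2 * tES) = δ ∧
        y0 * Real.exp (β1 * tES) = δ ^ (-(β1 / α2)) * y0 ∧
        δ ≤ δ ^ (-(β1 / α2)) * y0 ∧ δ ^ (-(β1 / α2)) * y0 < 1) := by
  have hy0pos : 0 < y0 := lt_of_lt_of_le hδ0 hy0l
  have hlogδ : Real.log (1 / δ) = -Real.log δ := by
    rw [Real.log_div one_ne_zero (ne_of_gt hδ0), Real.log_one]; ring
  have hlogy : Real.log (1 / y0) = -Real.log y0 := by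
    rw [Real.log_div one_ne_zero (ne_of_gt hy0pos), Real.log_one]; ring
  have hlogrδ : Real.log (δ ^ (β1 / α2)) = (β1 / α2) * Real.log δ :=
    Real.log_rpow hδ0 _
  constructor
  · intro hle tER htER
    have hlog : (β1 / α2) * Real.log δ ≤ Real.log y0 := by
      rw [← hlogrδ]; exact Real.log_le_log (Real.rpow_pos_of_pos hδ0 _) hle
    refine ⟨?_, ?_, ?_, ?_, ?_⟩
    · rw [htER, hlogδ, hlogy]
      rw [div_mul_eq_mul_div, div_le_iff₀ hα2] at hlog
      have h2 : β1 * Real.log δ ≤ α2 * Real.log y0 := by linarith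
      rw [one_div, one_div, inv_mul_eq_div, inv_mul_eq_div,
        div_le_div_iff₀ hβ1 hα2]
      nlinarith
    · rw [htER, hlogy]
      have : β1 * ((1 / β1) * -Real.log y0) = -Real.log y0 := by
        field_simp
      rw [this, Real.exp_neg, Real.exp_log hy0pos, mul_inv_cancel₀ (ne_of_gt hy0pos)]
    · rw [htER, hlogy, Real.rpow_def_of_pos hy0pos, Real.exp_eq_exp]
      field_simp
    · calc δ = (δ ^ (β1 / α2)) ^ (α2 / β1) := by
            have h1 : (β1 / α2) * (α2 / β1) = 1 := by field_simp
            rw [← Real.rpow_mul (le_of_lt hδ0), h1, Real.rpow_one]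
        _ ≤ y0 ^ (α2 / β1) :=
            Real.rpow_le_rpow (le_of_lt (Real.rpow_pos_of_pos hδ0 _)) hle
              (le_of_lt (div_pos hα2 hβ1))
    · exact Real.rpow_le_one (le_of_lt hy0pos) hy0u (by positivity)
  · intro hlt tES htES
    have hlog : Real.log y0 < (β1 / α2) * Real.log δ := by
      rw [← hlogrδ]; exact Real.log_lt_log hy0pos hlt
    have hkey : α2 * Real.log y0 < β1 * Real.log δ := by
      rw [div_mul_eq_mul_div, lt_div_iff₀ hα2] at hlog
      nlinarith
    have hinv1 : (1:ℝ) ≤ δ ^ (-(β1 / α2)) :=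
      Real.one_le_rpow_of_pos_of_le_one_of_nonpos hδ0 (le_of_lt hδ1)
        (neg_nonpos.mpr (le_of_lt (div_pos hβ1 hα2)))
    refine ⟨?_, ?_, ?_, ?_, ?_⟩
    · rw [htES, hlogδ, hlogy, one_div, one_div, inv_mul_eq_div, inv_mul_eq_div,
        div_lt_div_iff₀ hα2 hβ1]
      nlinarith
    · rw [htES, hlogδ]
      have h2 : -α2 * ((1 / α2) * -Real.log δ) = Real.log δ := by field_simp
      rw [h2, Real.exp_log hδ0]
    · rw [htES, hlogδ, Real.rpow_def_of_pos hδ0, mul_comm _ y0]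
      congr 1
      rw [Real.exp_eq_exp]
      field_simp
    · calc δ ≤ y0 := hy0l
        _ = 1 * y0 := (one_mul y0).symm
        _ ≤ δ ^ (-(β1 / α2)) * y0 :=
            mul_le_mul_of_nonneg_right hinv1 (le_of_lt hy0pos)
    · calc δ ^ (-(β1 / α2)) * y0 < δ ^ (-(β1 / α2)) * δ ^ (β1 / α2) :=
            mul_lt_mul_of_pos_left hlt (Real.rpow_pos_of_pos hδ0 _)
        _ = 1 := by
            rw [Real.rpow_neg (le_of_lt hδ0),
              inv_mul_cancel₀ (ne_of_gt (Real.rpow_pos_of_pos hδ0 _))]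
end

section
/- Let α1, β2 > 0, δ ∈ (0,1), and x0 ∈ [δ,1). Consider the resting-state flow started at (x0, 1): x(t) = x0·e^(α1·t), y(t) = e^(−β2·t). (i) If x0 ≥ δ^(α1/β2), then t_RE := (1/α1)·ln(1/x0) satisfies t_RE ≤ (1/β2)·ln(1/δ), x(t_RE) = 1, y(t_RE) = x0^(β2/α1), and δ ≤ x0^(β2/α1) < 1; that is, the flow exits the square [δ,1]² through the edge x = 1 at the point (1, x0^(β2/α1)). (ii) If x0 < δ^(α1/β2), then t_RS := (1/β2)·ln(1/δ) satisfies t_RS < (1/α1)·ln(1/x0), y(t_RS) = δ, x(t_RS) = δ^(−α1/β2)·x0, and δ ≤ δ^(−α1/β2)·x0 < 1; that is, the flow exits through the edge y = δ at the point (δ^(−α1/β2)·x0, δ). -/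
/-- The resting-state branch of the Poincaré map of the single-cow
model.  Starting from `(x0, 1)` with `x0 ∈ [δ,1)`, the flow
`x(t) = x0·exp(α1·t)`, `y(t) = exp(−β2·t)` exits the square `[δ,1]²`:
(i) if `x0 ≥ δ^(α1/β2)` it exits through the edge `x = 1` at the point
`(1, x0^(β2/α1))` at time `t_RE = (1/α1)·ln(1/x0)`;
(ii) if `x0 < δ^(α1/β2)` it exits through the edge `y = δ` at the point
`(δ^(−α1/β2)·x0, δ)` at time `t_RS = (1/β2)·ln(1/δ)`. -/
theorem resting_branch_of_poincare_map
    (α1 β2 δ x0 : ℝ)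
    (hα1 : 0 < α1) (hβ2 : 0 < β2) (hδ0 : 0 < δ) (hδ1 : δ < 1)
    (hx0l : δ ≤ x0) (hx0u : x0 < 1) :
    ((δ ^ (α1 / β2) ≤ x0) →
      ∀ tRE : ℝ, tRE = (1 / α1) * Real.log (1 / x0) →
        tRE ≤ (1 / β2) * Real.log (1 / δ) ∧
        x0 * Real.exp (α1 * tRE) = 1 ∧
        Real.exp (-β2 * tRE) = x0 ^ (β2 / α1) ∧
        δ ≤ x0 ^ (β2 / α1) ∧ x0 ^ (β2 / α1) < 1) ∧
    ((x0 < δ ^ (α1 / β2)) →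
      ∀ tRS : ℝ, tRS = (1 / β2) * Real.log (1 / δ) →
        tRS < (1 / α1) * Real.log (1 / x0) ∧
        Real.exp (-β2 * tRS) = δ ∧
        x0 * Real.exp (α1 * tRS) = δ ^ (-(α1 / β2)) * x0 ∧
        δ ≤ δ ^ (-(α1 / β2)) * x0 ∧ δ ^ (-(α1 / β2)) * x0 < 1) := by
  have hx0 : 0 < x0 := lt_of_lt_of_le hδ0 hx0l
  have hlx : Real.log x0 < 0 := Real.log_neg hx0 hx0u
  have hlδ : Real.log δ < 0 := Real.log_neg hδ0 hδ1
  constructor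
  · intro h tRE ht
    have hh : α1 / β2 * Real.log δ ≤ Real.log x0 := by
      have := Real.log_le_log (Real.rpow_pos_of_pos hδ0 _) h
      rwa [Real.log_rpow hδ0] at this
    have key : α1 * Real.log δ ≤ β2 * Real.log x0 := by
      have := mul_le_mul_of_nonneg_left hh hβ2.le
      calc α1 * Real.log δ = β2 * (α1 / β2 * Real.log δ) := by field_simp
        _ ≤ β2 * Real.log x0 := this
    subst ht
    refine ⟨?_, ?_, ?_, ?_, ?_⟩
    · rw [one_div x0, one_div δ, Real.log_inv, Real.log_inv, one_div, one_div,
        inv_mul_eq_div, inv_mul_eq_div, div_le_div_iff₀ hα1 hβ2]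
      nlinarith
    · have h1 : α1 * (1 / α1 * Real.log (1 / x0)) = Real.log (1 / x0) := by
        field_simp
      rw [h1, Real.exp_log (by positivity)]
      field_simp
    · rw [Real.rpow_def_of_pos hx0]
      congr 1
      have hlog : Real.log (1 / x0) = -Real.log x0 := by
        rw [one_div, Real.log_inv]
      rw [hlog]; field_simp
    · calc δ = (δ ^ (α1 / β2)) ^ (β2 / α1) := by
            rw [← Real.rpow_mul hδ0.le, div_mul_div_comm, mul_comm,
              div_self (by positivity), Real.rpow_one]
        _ ≤ x0 ^ (β2 / α1) :=
            Real.rpow_le_rpow (Real.rpow_pos_of_pos hδ0 _).le h (by positivity)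
    · exact Real.rpow_lt_one hx0.le hx0u (by positivity)
  · intro h tRS ht
    have hh : Real.log x0 < α1 / β2 * Real.log δ := by
      have := Real.log_lt_log hx0 h
      rwa [Real.log_rpow hδ0] at this
    have key : β2 * Real.log x0 < α1 * Real.log δ := by
      have := mul_lt_mul_of_pos_left hh hβ2
      calc β2 * Real.log x0 < β2 * (α1 / β2 * Real.log δ) := this
        _ = α1 * Real.log δ := by field_simp
    subst ht
    have hδpow : (0:ℝ) < δ ^ (-(α1 / β2)) := Real.rpow_pos_of_pos hδ0 _
    refine ⟨?_, ?_, ?_, ?_, ?_⟩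
    · rw [one_div x0, one_div δ, Real.log_inv, Real.log_inv, one_div, one_div,
        inv_mul_eq_div, inv_mul_eq_div, div_lt_div_iff₀ hβ2 hα1]
      nlinarith
    · have h1 : -β2 * (1 / β2 * Real.log (1 / δ)) = Real.log δ := by
        rw [one_div δ, Real.log_inv]; field_simp
      rw [h1, Real.exp_log hδ0]
    · rw [mul_comm (δ ^ (-(α1 / β2))) x0]
      congr 1
      rw [Real.rpow_def_of_pos hδ0]
      congr 1
      have hlog : Real.log (1 / δ) = -Real.log δ := by
        rw [one_div, Real.log_inv]
      rw [hlog]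
      field_simp
    · have h1 : (1:ℝ) ≤ δ ^ (-(α1 / β2)) :=
        Real.one_le_rpow_of_pos_of_le_one_of_nonpos hδ0 hδ1.le (neg_nonpos.mpr (div_pos hα1 hβ2).le)
      calc δ = 1 * δ := (one_mul δ).symm
        _ ≤ δ ^ (-(α1 / β2)) * x0 := mul_le_mul h1 hx0l hδ0.le hδpow.le
    · have := mul_lt_mul_of_pos_left h hδpow
      calc δ ^ (-(α1 / β2)) * x0 < δ ^ (-(α1 / β2)) * δ ^ (α1 / β2) := this
        _ = 1 := by rw [← Real.rpow_add hδ0, neg_add_cancel, Real.rpow_zero]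
end

section
/- Let α1, β1 > 0, δ ∈ (0,1), and y0 ∈ [δ,1). Consider the standing-state flow started at (δ, y0): x(t) = δ·e^(α1·t), y(t) = y0·e^(β1·t). (i) If y0 ≤ δ^(β1/α1), then t_SE := (1/α1)·ln(1/δ) satisfies t_SE ≤ (1/β1)·ln(1/y0), x(t_SE) = 1, y(t_SE) = δ^(−β1/α1)·y0, and δ ≤ δ^(−β1/α1)·y0 ≤ 1; that is, the flow exits the square [δ,1]² through the edge x = 1 at the point (1, δ^(−β1/α1)·y0). (ii) If y0 > δ^(β1/α1), then t_SR := (1/β1)·ln(1/y0) satisfies t_SR < (1/α1)·ln(1/δ), y(t_SR) = 1, x(t_SR) = y0^(−α1/β1)·δ, and δ < y0^(−α1/β1)·δ < 1; that is, the flow exits through the edge y = 1 at the point (y0^(−α1/β1)·δ, 1). -/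
/-- The standing-state branch (started on the edge `x = δ`) of the
Poincaré map of the single-cow model.  Starting from `(δ, y0)` with
`y0 ∈ [δ,1)`, the flow `x(t) = δ·exp(α1·t)`, `y(t) = y0·exp(β1·t)` exits the
square `[δ,1]²`:
(i) if `y0 ≤ δ^(β1/α1)` it exits through the edge `x = 1` at the point
`(1, δ^(−β1/α1)·y0)` at time `t_SE = (1/α1)·ln(1/δ)`;
(ii) if `y0 > δ^(β1/α1)` it exits through the edge `y = 1` at the point
`(y0^(−α1/β1)·δ, 1)` at time `t_SR = (1/β1)·ln(1/y0)`. -/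
theorem standing_branch_of_poincare_map_from_left_edge
    (α1 β1 δ y0 : ℝ)
    (hα1 : 0 < α1) (hβ1 : 0 < β1) (hδ0 : 0 < δ) (hδ1 : δ < 1)
    (hy0l : δ ≤ y0) (hy0u : y0 < 1) :
    ((y0 ≤ δ ^ (β1 / α1)) →
      ∀ tSE : ℝ, tSE = (1 / α1) * Real.log (1 / δ) →
        tSE ≤ (1 / β1) * Real.log (1 / y0) ∧
        δ * Real.exp (α1 * tSE) = 1 ∧
        y0 * Real.exp (β1 * tSE) = δ ^ (-(β1 / α1)) * y0 ∧
        δ ≤ δ ^ (-(β1 / α1)) * y0 ∧ δ ^ (-(β1 / α1)) * y0 ≤ 1) ∧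
    ((δ ^ (β1 / α1) < y0) →
      ∀ tSR : ℝ, tSR = (1 / β1) * Real.log (1 / y0) →
        tSR < (1 / α1) * Real.log (1 / δ) ∧
        y0 * Real.exp (β1 * tSR) = 1 ∧
        δ * Real.exp (α1 * tSR) = y0 ^ (-(α1 / β1)) * δ ∧
        δ < y0 ^ (-(α1 / β1)) * δ ∧ y0 ^ (-(α1 / β1)) * δ < 1) := by
  have hy0pos : 0 < y0 := lt_of_lt_of_le hδ0 hy0l
  have hlogδ : Real.log δ < 0 := Real.log_neg hδ0 hδ1
  have hlogy : Real.log y0 < 0 := Real.log_neg hy0pos hy0u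
  have hα1' : α1 ≠ 0 := ne_of_gt hα1
  have hβ1' : β1 ≠ 0 := ne_of_gt hβ1
  have h1δ : Real.log (1/δ) = -Real.log δ := by
    rw [Real.log_div one_ne_zero (ne_of_gt hδ0), Real.log_one]; ring
  have h1y : Real.log (1/y0) = -Real.log y0 := by
    rw [Real.log_div one_ne_zero (ne_of_gt hy0pos), Real.log_one]; ring
  have hrpowδ : ∀ z : ℝ, δ ^ (z:ℝ) = Real.exp (z * Real.log δ) := by
    intro z; rw [Real.rpow_def_of_pos hδ0]; ring_nf
  have hrpowy : ∀ z : ℝ, y0 ^ (z:ℝ) = Real.exp (z * Real.log y0) := by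
    intro z; rw [Real.rpow_def_of_pos hy0pos]; ring_nf
  have hid1 : α1 * (β1/α1 * Real.log δ) = β1 * Real.log δ := by field_simp
  constructor
  · intro hle tSE htSE
    have hloge : Real.log y0 ≤ (β1/α1) * Real.log δ := by
      have := Real.log_le_log hy0pos hle
      rwa [Real.log_rpow hδ0] at this
    have hloge' : α1 * Real.log y0 ≤ β1 * Real.log δ := by
      have := mul_le_mul_of_nonneg_left hloge hα1.le
      linarith
    refine ⟨?_, ?_, ?_, ?_, ?_⟩
    · rw [htSE, h1δ, h1y]
      rw [div_mul_eq_mul_div, div_mul_eq_mul_div, div_le_div_iff₀ hα1 hβ1]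
      nlinarith
    · rw [htSE, h1δ]
      have : α1 * (1/α1 * -Real.log δ) = -Real.log δ := by field_simp
      rw [this, Real.exp_neg, Real.exp_log hδ0]
      field_simp
    · rw [htSE, h1δ, hrpowδ]
      have harg : β1 * (1/α1 * -Real.log δ) = -(β1/α1) * Real.log δ := by
        field_simp
      rw [harg]; ring
    · have h1 : (1:ℝ) ≤ δ ^ (-(β1/α1)) := by
        apply Real.one_le_rpow_of_pos_of_le_one_of_nonpos hδ0 (le_of_lt hδ1)
        have : 0 < β1/α1 := div_pos hβ1 hα1
        linarith
      calc δ ≤ y0 := hy0l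
        _ = 1 * y0 := (one_mul y0).symm
        _ ≤ δ ^ (-(β1/α1)) * y0 :=
            mul_le_mul_of_nonneg_right h1 (le_of_lt hy0pos)
    · have hpos : (0:ℝ) < δ ^ (-(β1/α1)) := Real.rpow_pos_of_pos hδ0 _
      have := mul_le_mul_of_nonneg_left hle (le_of_lt hpos)
      calc δ ^ (-(β1/α1)) * y0 ≤ δ ^ (-(β1/α1)) * δ ^ (β1/α1) := this
        _ = δ ^ (-(β1/α1) + β1/α1) := (Real.rpow_add hδ0 _ _).symm
        _ = 1 := by rw [neg_add_cancel, Real.rpow_zero]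
  · intro hlt tSR htSR
    have hloge : (β1/α1) * Real.log δ < Real.log y0 := by
      have := Real.log_lt_log (Real.rpow_pos_of_pos hδ0 _) hlt
      rwa [Real.log_rpow hδ0] at this
    have hloge' : β1 * Real.log δ < α1 * Real.log y0 := by
      have := mul_lt_mul_of_pos_left hloge hα1
      linarith
    refine ⟨?_, ?_, ?_, ?_, ?_⟩
    · rw [htSR, h1δ, h1y]
      rw [div_mul_eq_mul_div, div_mul_eq_mul_div, div_lt_div_iff₀ hβ1 hα1]
      nlinarith
    · rw [htSR, h1y]
      have : β1 * (1/β1 * -Real.log y0) = -Real.log y0 := by field_simp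
      rw [this, Real.exp_neg, Real.exp_log hy0pos]
      field_simp
    · rw [htSR, h1y, hrpowy]
      have harg : α1 * (1/β1 * -Real.log y0) = -(α1/β1) * Real.log y0 := by
        field_simp
      rw [harg]; ring
    · have h1 : (1:ℝ) < y0 ^ (-(α1/β1)) := by
        rw [Real.one_lt_rpow_iff_of_pos hy0pos]
        exact Or.inr ⟨hy0u, neg_neg_of_pos (div_pos hα1 hβ1)⟩
      nlinarith
    · have hδlt : δ < y0 ^ (α1/β1) := by
        have h2 := Real.rpow_lt_rpow (le_of_lt (Real.rpow_pos_of_pos hδ0 _)) hlt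
          (div_pos hα1 hβ1)
        rw [← Real.rpow_mul hδ0.le] at h2
        have he : β1/α1 * (α1/β1) = 1 := by field_simp
        rwa [he, Real.rpow_one] at h2
      have hpos : (0:ℝ) < y0 ^ (-(α1/β1)) := Real.rpow_pos_of_pos hy0pos _
      calc y0 ^ (-(α1/β1)) * δ < y0 ^ (-(α1/β1)) * y0 ^ (α1/β1) :=
            mul_lt_mul_of_pos_left hδlt hpos
        _ = y0 ^ (-(α1/β1) + α1/β1) := (Real.rpow_add hy0pos _ _).symm
        _ = 1 := by rw [neg_add_cancel, Real.rpow_zero]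
end

section
/- Let α1, β1 > 0, δ ∈ (0,1), and x0 ∈ (δ,1). Consider the standing-state flow started at (x0, δ): x(t) = x0·e^(α1·t), y(t) = δ·e^(β1·t). (i) If x0 ≥ δ^(α1/β1), then t_SE := (1/α1)·ln(1/x0) satisfies t_SE ≤ (1/β1)·ln(1/δ), x(t_SE) = 1, y(t_SE) = x0^(−β1/α1)·δ, and δ < x0^(−β1/α1)·δ ≤ 1; that is, the flow exits the square [δ,1]² through the edge x = 1 at the point (1, x0^(−β1/α1)·δ). (ii) If x0 < δ^(α1/β1), then t_SR := (1/β1)·ln(1/δ) satisfies t_SR < (1/α1)·ln(1/x0), y(t_SR) = 1, x(t_SR) = δ^(−α1/β1)·x0, and δ < δ^(−α1/β1)·x0 < 1; that is, the flow exits through the edge y = 1 at the point (δ^(−α1/β1)·x0, 1). -/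
/-- The standing-state branch (started on the edge `y = δ`) of the
Poincaré map of the single-cow model.  Starting from `(x0, δ)` with
`x0 ∈ (δ,1)`, the flow `x(t) = x0·exp(α1·t)`, `y(t) = δ·exp(β1·t)` exits the
square `[δ,1]²`:
(i) if `x0 ≥ δ^(α1/β1)` it exits through the edge `x = 1` at the point
`(1, x0^(−β1/α1)·δ)` at time `t_SE = (1/α1)·ln(1/x0)`;
(ii) if `x0 < δ^(α1/β1)` it exits through the edge `y = 1` at the point
`(δ^(−α1/β1)·x0, 1)` at time `t_SR = (1/β1)·ln(1/δ)`. -/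
theorem standing_branch_of_poincare_map_from_bottom_edge
    (α1 β1 δ x0 : ℝ)
    (hα1 : 0 < α1) (hβ1 : 0 < β1) (hδ0 : 0 < δ) (hδ1 : δ < 1)
    (hx0l : δ < x0) (hx0u : x0 < 1) :
    ((δ ^ (α1 / β1) ≤ x0) →
      ∀ tSE : ℝ, tSE = (1 / α1) * Real.log (1 / x0) →
        tSE ≤ (1 / β1) * Real.log (1 / δ) ∧
        x0 * Real.exp (α1 * tSE) = 1 ∧
        δ * Real.exp (β1 * tSE) = x0 ^ (-(β1 / α1)) * δ ∧
        δ < x0 ^ (-(β1 / α1)) * δ ∧ x0 ^ (-(β1 / α1)) * δ ≤ 1) ∧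
    ((x0 < δ ^ (α1 / β1)) →
      ∀ tSR : ℝ, tSR = (1 / β1) * Real.log (1 / δ) →
        tSR < (1 / α1) * Real.log (1 / x0) ∧
        δ * Real.exp (β1 * tSR) = 1 ∧
        x0 * Real.exp (α1 * tSR) = δ ^ (-(α1 / β1)) * x0 ∧
        δ < δ ^ (-(α1 / β1)) * x0 ∧ δ ^ (-(α1 / β1)) * x0 < 1) := by
  have hx0 : 0 < x0 := hδ0.trans hx0l
  have hlx0 : Real.log x0 < 0 := Real.log_neg hx0 hx0u
  have hlδ : Real.log δ < 0 := Real.log_neg hδ0 hδ1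
  have hlδx0 : Real.log δ < Real.log x0 := Real.log_lt_log hδ0 hx0l
  have hlog1x0 : Real.log (1 / x0) = -Real.log x0 := by
    rw [one_div, Real.log_inv]
  have hlog1δ : Real.log (1 / δ) = -Real.log δ := by
    rw [one_div, Real.log_inv]
  constructor
  · intro h tSE ht
    have hc : (α1 / β1) * Real.log δ ≤ Real.log x0 := by
      have := Real.log_le_log (Real.rpow_pos_of_pos hδ0 _) h
      rwa [Real.log_rpow hδ0] at this
    have key : α1 * Real.log δ ≤ β1 * Real.log x0 := by
      have h1 := mul_le_mul_of_nonneg_left hc hβ1.le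
      have h2 : β1 * (α1 / β1 * Real.log δ) = α1 * Real.log δ := by
        field_simp
      linarith
    subst ht
    refine ⟨?_, ?_, ?_, ?_, ?_⟩
    · rw [hlog1x0, hlog1δ, one_div, one_div, inv_mul_eq_div, inv_mul_eq_div,
        div_le_div_iff₀ hα1 hβ1]
      nlinarith
    · rw [hlog1x0, show α1 * (1 / α1 * -Real.log x0) = -Real.log x0 by
        field_simp, Real.exp_neg, Real.exp_log hx0]
      field_simp
    · rw [hlog1x0, Real.rpow_def_of_pos hx0]
      ring_nf
    · nth_rewrite 1 [show δ = 1 * δ by ring]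
      refine mul_lt_mul_of_pos_right ?_ hδ0
      rw [Real.one_lt_rpow_iff_of_pos hx0]
      right
      exact ⟨hx0u, neg_neg_of_pos (div_pos hβ1 hα1)⟩
    · rw [Real.rpow_def_of_pos hx0]
      calc Real.exp (Real.log x0 * -(β1 / α1)) * δ
          = Real.exp (Real.log x0 * -(β1 / α1) + Real.log δ) := by
            rw [Real.exp_add, Real.exp_log hδ0]
        _ ≤ 1 := by
            rw [← Real.exp_zero]
            apply Real.exp_le_exp.mpr
            have h4 : Real.log x0 * -(β1 / α1) + Real.log δ
                = (α1 * Real.log δ - β1 * Real.log x0) / α1 := by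
              field_simp; ring
            rw [h4]
            apply div_nonpos_of_nonpos_of_nonneg (by linarith) hα1.le
  · intro h tSR ht
    have hc : Real.log x0 < (α1 / β1) * Real.log δ := by
      have := Real.log_lt_log hx0 h
      rwa [Real.log_rpow hδ0] at this
    have key : β1 * Real.log x0 < α1 * Real.log δ := by
      have h1 := mul_lt_mul_of_pos_left hc hβ1
      have h2 : β1 * (α1 / β1 * Real.log δ) = α1 * Real.log δ := by
        field_simp
      linarith
    subst ht
    refine ⟨?_, ?_, ?_, ?_, ?_⟩
    · rw [hlog1x0, hlog1δ, one_div, one_div, inv_mul_eq_div, inv_mul_eq_div,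
        div_lt_div_iff₀ hβ1 hα1]
      nlinarith
    · rw [hlog1δ, show β1 * (1 / β1 * -Real.log δ) = -Real.log δ by
        field_simp, Real.exp_neg, Real.exp_log hδ0]
      field_simp
    · rw [hlog1δ, Real.rpow_def_of_pos hδ0]
      ring_nf
    · rw [Real.rpow_def_of_pos hδ0]
      calc δ = Real.exp (Real.log δ) := (Real.exp_log hδ0).symm
        _ < Real.exp (Real.log δ * -(α1 / β1) + Real.log x0) := by
            apply Real.exp_lt_exp.mpr
            have h5 : 0 < α1 / β1 := div_pos hα1 hβ1
            nlinarith
        _ = Real.exp (Real.log δ * -(α1 / β1)) * x0 := by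
            rw [Real.exp_add, Real.exp_log hx0]
    · rw [Real.rpow_def_of_pos hδ0]
      calc Real.exp (Real.log δ * -(α1 / β1)) * x0
          = Real.exp (Real.log δ * -(α1 / β1) + Real.log x0) := by
            rw [Real.exp_add, Real.exp_log hx0]
        _ < 1 := by
            rw [← Real.exp_zero]
            apply Real.exp_lt_exp.mpr
            have h4 : Real.log δ * -(α1 / β1) + Real.log x0
                = (β1 * Real.log x0 - α1 * Real.log δ) / β1 := by
              field_simp; ring
            rw [h4]
            exact div_neg_of_neg_of_pos (by linarith) hβ1
end

section
/- Let C > 0 and r > 0 with r ≠ 1, and define h : (0,∞) → (0,∞) by h(y) = C·y^(−r). Then y* = C^(1/(1+r)) is the unique fixed point of h in (0,∞); for every y > 0 and every n ≥ 0, ln(hⁿ(y)) − ln(y*) = (−r)ⁿ·(ln(y) − ln(y*)); consequently, if r < 1 then hⁿ(y) → y* as n → ∞ for every y > 0 (the fixed point is globally asymptotically stable), while if r > 1 then for every y ≠ y* the quantity |ln(hⁿ(y)) − ln(y*)| = rⁿ·|ln(y) − ln(y*)| tends to infinity (the fixed point is unstable). -/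
/-- for `C > 0` and `r > 0` with `r ≠ 1`, the map
`h(y) = C·y^(−r)` on `(0,∞)` has the unique fixed point `y* = C^(1/(1+r))`;
for every `y > 0` and every `n`,
`ln(hⁿ(y)) − ln(y*) = (−r)ⁿ·(ln(y) − ln(y*))`; if `r < 1` then `hⁿ(y) → y*`
for every `y > 0` (global asymptotic stability), while if `r > 1` then for
every `y ≠ y*` the quantity `|ln(hⁿ(y)) − ln(y*)| = rⁿ·|ln(y) − ln(y*)|`
tends to infinity (instability). -/
theorem one_dim_return_map_fixed_point_stability
    (C r : ℝ) (hC : 0 < C) (hr : 0 < r) (hr1 : r ≠ 1)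
    (h : ℝ → ℝ) (hh : ∀ y : ℝ, h y = C * y ^ (-r))
    (ystar : ℝ) (hystar : ystar = C ^ (1 / (1 + r))) :
    (h ystar = ystar ∧ ∀ y : ℝ, 0 < y → h y = y → y = ystar) ∧
    (∀ y : ℝ, 0 < y → ∀ n : ℕ,
      Real.log (h^[n] y) - Real.log ystar
        = (-r) ^ n * (Real.log y - Real.log ystar)) ∧
    (r < 1 → ∀ y : ℝ, 0 < y →
      Filter.Tendsto (fun n : ℕ => h^[n] y) Filter.atTop (nhds ystar)) ∧
    (1 < r → ∀ y : ℝ, 0 < y → y ≠ ystar →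
      (∀ n : ℕ, |Real.log (h^[n] y) - Real.log ystar|
        = r ^ n * |Real.log y - Real.log ystar|) ∧
      Filter.Tendsto (fun n : ℕ => |Real.log (h^[n] y) - Real.log ystar|)
        Filter.atTop Filter.atTop) := by
  have h1r : (0:ℝ) < 1 + r := by linarith
  have hys_pos : 0 < ystar := by rw [hystar]; exact Real.rpow_pos_of_pos hC _
  have hlogys : Real.log ystar = (1 / (1 + r)) * Real.log C := by
    rw [hystar, Real.log_rpow hC]
  have hlogC : Real.log C = (1 + r) * Real.log ystar := by
    rw [hlogys]; field_simp
  -- positivity and log of h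
  have hpos : ∀ y : ℝ, 0 < y → 0 < h y := by
    intro y hy; rw [hh]; positivity
  have hlog : ∀ y : ℝ, 0 < y →
      Real.log (h y) = Real.log C - r * Real.log y := by
    intro y hy
    rw [hh, Real.log_mul (ne_of_gt hC) (ne_of_gt (Real.rpow_pos_of_pos hy _)),
      Real.log_rpow hy]
    ring
  have hstep : ∀ y : ℝ, 0 < y →
      Real.log (h y) - Real.log ystar = (-r) * (Real.log y - Real.log ystar) := by
    intro y hy
    rw [hlog y hy, hlogC]; ring
  have hiter_pos : ∀ y : ℝ, 0 < y → ∀ n : ℕ, 0 < h^[n] y := by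
    intro y hy n
    induction n with
    | zero => simpa using hy
    | succ n ih => rw [Function.iterate_succ_apply']; exact hpos _ ih
  have hmain : ∀ y : ℝ, 0 < y → ∀ n : ℕ,
      Real.log (h^[n] y) - Real.log ystar
        = (-r) ^ n * (Real.log y - Real.log ystar) := by
    intro y hy n
    induction n with
    | zero => simp
    | succ n ih =>
        rw [Function.iterate_succ_apply', hstep _ (hiter_pos y hy n), ih,
          pow_succ]
        ring
  refine ⟨⟨?_, ?_⟩, hmain, ?_, ?_⟩
  · -- fixed point
    have hlogfix : Real.log (h ystar) = Real.log ystar := by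
      rw [hlog _ hys_pos, hlogC]; ring
    exact Real.log_injOn_pos (Set.mem_Ioi.mpr (hpos _ hys_pos))
      (Set.mem_Ioi.mpr hys_pos) hlogfix
  · intro y hy hfix
    have := hlog y hy
    rw [hfix, hlogC] at this
    have hlogeq : Real.log y = Real.log ystar := by
      have : (1 + r) * Real.log y = (1 + r) * Real.log ystar := by linarith
      exact mul_left_cancel₀ (ne_of_gt h1r) this
    have := Real.log_injOn_pos (Set.mem_Ioi.mpr hy) (Set.mem_Ioi.mpr hys_pos) hlogeq
    exact this
  · -- r < 1, convergence
    intro hlt y hy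
    have habs : |(-r)| < 1 := by rw [abs_neg, abs_of_pos hr]; exact hlt
    have hlim : Filter.Tendsto (fun n : ℕ => (-r) ^ n * (Real.log y - Real.log ystar))
        Filter.atTop (nhds 0) := by
      have := tendsto_pow_atTop_nhds_zero_of_abs_lt_one habs
      simpa using this.mul_const (Real.log y - Real.log ystar)
    have hloglim : Filter.Tendsto (fun n : ℕ => Real.log (h^[n] y))
        Filter.atTop (nhds (Real.log ystar)) := by
      have : Filter.Tendsto (fun n : ℕ => Real.log (h^[n] y) - Real.log ystar)
          Filter.atTop (nhds 0) := by
        simpa [hmain y hy] using hlim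
      have := this.add_const (Real.log ystar)
      simpa using this
    have hexp : Filter.Tendsto (fun n : ℕ => Real.exp (Real.log (h^[n] y)))
        Filter.atTop (nhds (Real.exp (Real.log ystar))) :=
      (Real.continuous_exp.continuousAt.tendsto).comp hloglim
    rw [Real.exp_log hys_pos] at hexp
    refine hexp.congr fun n => ?_
    exact Real.exp_log (hiter_pos y hy n)
  · -- r > 1, instability
    intro hgt y hy hne
    have habs : ∀ n : ℕ, |Real.log (h^[n] y) - Real.log ystar|
        = r ^ n * |Real.log y - Real.log ystar| := by
      intro n
      rw [hmain y hy n, abs_mul, abs_pow, abs_neg, abs_of_pos hr]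
    refine ⟨habs, ?_⟩
    have hlogne : Real.log y - Real.log ystar ≠ 0 := by
      intro hcontra
      apply hne
      have : Real.log y = Real.log ystar := by linarith [hcontra]
      exact Real.log_injOn_pos (Set.mem_Ioi.mpr hy) (Set.mem_Ioi.mpr hys_pos) this
    have hc : 0 < |Real.log y - Real.log ystar| := abs_pos.mpr hlogne
    have := (tendsto_pow_atTop_atTop_of_one_lt hgt).atTop_mul_const hc
    exact this.congr fun n => (habs n).symm
end
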